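/- Let G be a connected finite planar quadrangulation with boundary such that no train track is a loop, with bipartite vertex coloring into black and white. For each internal face f with black vertices x_f, y_f and white vertices u_f, v_f, the linear map Φ: ℝ^V → ℝ^F defined by Φ(h)_f = h_{x_f} + h_{y_f} − h_{u_f} − h_{v_f} is surjective. -/
import Mathlib


open Finset

/-- Combinatorial data of a finite bipartite quadrangulation with boundary:
vertices `V`, internal faces `F`, each face having black vertices `x f, y f` and
white vertices `u f, v f`, in cyclic order `x f, u f, y f, v f`. -/
structure QuadData (V F : Type*) where
  x : F → V
  y : F → V
  u : F → V
  v : F → V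
  /-- a bipartite coloring of the vertices -/
  color : V → Bool
  colx : ∀ f, color (x f) = true
  coly : ∀ f, color (y f) = true
  colu : ∀ f, color (u f) = false
  colv : ∀ f, color (v f) = false
  xy : ∀ f, x f ≠ y f
  uv : ∀ f, u f ≠ v f

namespace QuadData

variable {V F : Type*} [Fintype V] [DecidableEq V] [Fintype F] [DecidableEq F]
variable (Q : QuadData V F)

/-- The four sides of a face. -/
def sides (f : F) : Finset (Sym2 V) :=
  {s(Q.x f, Q.u f), s(Q.u f, Q.y f), s(Q.y f, Q.v f), s(Q.v f, Q.x f)}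

/-- The edge set: all sides of internal faces. -/
def edgeSet : Finset (Sym2 V) := Finset.univ.biUnion Q.sides

/-- The number of internal faces adjacent to an edge. -/
def faceCount (e : Sym2 V) : ℕ := (Finset.univ.filter (fun f => e ∈ Q.sides f)).card

/-- The underlying simple graph. -/
def graph : SimpleGraph V := SimpleGraph.fromRel (fun a b => s(a, b) ∈ Q.edgeSet)

/-- Proper quadrangulation with boundary: every edge borders at most two internal
faces, the graph is connected, and Euler's formula (planarity) holds. -/
structure IsProper : Prop where
  edge_le_two : ∀ e ∈ Q.edgeSet, Q.faceCount e ≤ 2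
  connected : Q.graph.Connected
  euler : (Fintype.card V : ℤ) - (Q.edgeSet.card : ℤ) + (Fintype.card F : ℤ) = 1

/-- Two edges are opposite in a face: a train track entering a face through one
of them exits through the other. -/
def Opp (e e' : Sym2 V) : Prop :=
  ∃ f : F, (e = s(Q.x f, Q.u f) ∧ e' = s(Q.y f, Q.v f)) ∨
    (e = s(Q.y f, Q.v f) ∧ e' = s(Q.x f, Q.u f)) ∨
    (e = s(Q.u f, Q.y f) ∧ e' = s(Q.v f, Q.x f)) ∨
    (e = s(Q.v f, Q.x f) ∧ e' = s(Q.u f, Q.y f))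

/-- The setoid on edges generated by the opposite-edge relation; its classes are
the train tracks. -/
def trackSetoid : Setoid {e : Sym2 V // e ∈ Q.edgeSet} :=
  Relation.EqvGen.setoid (fun e e' => Q.Opp e.1 e'.1)

/-- The set of train tracks of the quadrangulation. -/
def Tracks : Type _ := Quotient Q.trackSetoid

/-- No train track is a loop: every train track reaches the boundary, i.e.
contains an edge adjacent to exactly one internal face. -/
def NoLoopTrack : Prop :=
  ∀ e : {e : Sym2 V // e ∈ Q.edgeSet}, ∃ e' : {e : Sym2 V // e ∈ Q.edgeSet},
    Q.trackSetoid.r e e' ∧ Q.faceCount e'.1 = 1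

end QuadData

namespace QuadData

variable {V F : Type*} [Fintype V] [DecidableEq V] [Fintype F] [DecidableEq F]
variable (Q : QuadData V F)

lemma sides_subset (f : F) : Q.sides f ⊆ Q.edgeSet :=
  fun e he => Finset.mem_biUnion.2 ⟨f, Finset.mem_univ f, he⟩

lemma mem_sides {e : Sym2 V} {f : F} : e ∈ Q.sides f ↔
    e = s(Q.x f, Q.u f) ∨ e = s(Q.u f, Q.y f) ∨ e = s(Q.y f, Q.v f) ∨ e = s(Q.v f, Q.x f) := by
  simp [sides]

lemma bw_eq {a b c d : V} (ha : Q.color a = true) (hb : Q.color b = false)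
    (hc : Q.color c = true) (hd : Q.color d = false) :
    s(a, b) = s(c, d) ↔ a = c ∧ b = d := by
  rw [Sym2.eq_iff]
  constructor
  · rintro (⟨h1, h2⟩ | ⟨h1, h2⟩)
    · exact ⟨h1, h2⟩
    · rw [h1] at ha; rw [ha] at hd; cases hd
  · rintro ⟨h1, h2⟩; exact Or.inl ⟨h1, h2⟩

lemma ne13 (f : F) : s(Q.x f, Q.u f) ≠ s(Q.y f, Q.v f) := by
  rw [Ne, Q.bw_eq (Q.colx f) (Q.colu f) (Q.coly f) (Q.colv f)]
  rintro ⟨h, -⟩; exact Q.xy f h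

lemma ne24 (f : F) : s(Q.u f, Q.y f) ≠ s(Q.v f, Q.x f) := by
  rw [show s(Q.u f, Q.y f) = s(Q.y f, Q.u f) from Sym2.eq_swap,
    show s(Q.v f, Q.x f) = s(Q.x f, Q.v f) from Sym2.eq_swap,
    Ne, Q.bw_eq (Q.coly f) (Q.colu f) (Q.colx f) (Q.colv f)]
  rintro ⟨h, -⟩; exact Q.xy f h.symm

lemma card_sides (f : F) : (Q.sides f).card = 4 := by
  have e12 : s(Q.x f, Q.u f) ≠ s(Q.u f, Q.y f) := by
    rw [show s(Q.u f, Q.y f) = s(Q.y f, Q.u f) from Sym2.eq_swap,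
      Ne, Q.bw_eq (Q.colx f) (Q.colu f) (Q.coly f) (Q.colu f)]
    rintro ⟨h, -⟩; exact Q.xy f h
  have e13 := Q.ne13 f
  have e14 : s(Q.x f, Q.u f) ≠ s(Q.v f, Q.x f) := by
    rw [show s(Q.v f, Q.x f) = s(Q.x f, Q.v f) from Sym2.eq_swap,
      Ne, Q.bw_eq (Q.colx f) (Q.colu f) (Q.colx f) (Q.colv f)]
    rintro ⟨-, h⟩; exact Q.uv f h
  have e23 : s(Q.u f, Q.y f) ≠ s(Q.y f, Q.v f) := by
    rw [show s(Q.u f, Q.y f) = s(Q.y f, Q.u f) from Sym2.eq_swap,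
      Ne, Q.bw_eq (Q.coly f) (Q.colu f) (Q.coly f) (Q.colv f)]
    rintro ⟨-, h⟩; exact Q.uv f h
  have e24 := Q.ne24 f
  have e34 : s(Q.y f, Q.v f) ≠ s(Q.v f, Q.x f) := by
    rw [show s(Q.v f, Q.x f) = s(Q.x f, Q.v f) from Sym2.eq_swap,
      Ne, Q.bw_eq (Q.coly f) (Q.colv f) (Q.colx f) (Q.colv f)]
    rintro ⟨h, -⟩; exact Q.xy f h.symm
  rw [sides]
  rw [Finset.card_insert_of_notMem (by simp [e12, e13, e14]),
    Finset.card_insert_of_notMem (by simp [e23, e24]),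
    Finset.card_insert_of_notMem (by simp [e34]), Finset.card_singleton]

lemma one_le_faceCount {e : Sym2 V} (he : e ∈ Q.edgeSet) : 1 ≤ Q.faceCount e := by
  obtain ⟨f, -, hf⟩ := Finset.mem_biUnion.1 he
  exact Finset.card_pos.2 ⟨f, Finset.mem_filter.2 ⟨Finset.mem_univ f, hf⟩⟩

lemma sum_faceCount : ∑ e ∈ Q.edgeSet, Q.faceCount e = 4 * Fintype.card F := by
  unfold faceCount
  calc ∑ e ∈ Q.edgeSet, (Finset.univ.filter fun f => e ∈ Q.sides f).card
      = ∑ e ∈ Q.edgeSet, ∑ f : F, (if e ∈ Q.sides f then 1 else 0) := by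
        refine Finset.sum_congr rfl fun e _ => ?_
        rw [Finset.card_filter]
    _ = ∑ f : F, ∑ e ∈ Q.edgeSet, (if e ∈ Q.sides f then 1 else 0) := Finset.sum_comm
    _ = ∑ f : F, (Q.sides f).card := by
        refine Finset.sum_congr rfl fun f _ => ?_
        rw [← Finset.card_filter]
        congr 1
        apply Finset.ext
        intro e
        simp only [Finset.mem_filter]
        exact ⟨fun h => h.2, fun h => ⟨Q.sides_subset f h, h⟩⟩
    _ = ∑ _f : F, 4 := Finset.sum_congr rfl fun f _ => Q.card_sides f
    _ = 4 * Fintype.card F := by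
        rw [Finset.sum_const, Finset.card_univ, smul_eq_mul, mul_comm]

lemma sum_fc_split (h2 : ∀ e ∈ Q.edgeSet, Q.faceCount e ≤ 2) (s : Finset (Sym2 V))
    (hs : s ⊆ Q.edgeSet) :
    ∑ e ∈ s, Q.faceCount e + (s.filter fun e => Q.faceCount e = 1).card = 2 * s.card := by
  rw [Finset.card_filter, ← Finset.sum_add_distrib]
  have key : ∀ e ∈ s, Q.faceCount e + (if Q.faceCount e = 1 then 1 else 0) = 2 := by
    intro e he
    have h1 := Q.one_le_faceCount (hs he)
    have h2' := h2 e (hs he)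
    split_ifs with h <;> omega
  rw [Finset.sum_congr rfl key, Finset.sum_const, smul_eq_mul, mul_comm]

lemma opp_mem {a b : Sym2 V} (h : Q.Opp a b) : a ∈ Q.edgeSet ∧ b ∈ Q.edgeSet := by
  obtain ⟨f, hc⟩ := h
  have hs := Q.sides_subset f
  rcases hc with ⟨h1, h2⟩ | ⟨h1, h2⟩ | ⟨h1, h2⟩ | ⟨h1, h2⟩ <;> subst h1 <;> subst h2 <;>
    exact ⟨hs (Q.mem_sides.2 (by tauto)), hs (Q.mem_sides.2 (by tauto))⟩

lemma even_card_sides_filter (P : Sym2 V → Prop) [DecidablePred P]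
    (hinv : ∀ a b, Q.Opp a b → (P a ↔ P b)) (f : F) :
    2 ∣ ((Q.sides f).filter P).card := by
  have h13 : P s(Q.x f, Q.u f) ↔ P s(Q.y f, Q.v f) :=
    hinv _ _ ⟨f, Or.inl ⟨rfl, rfl⟩⟩
  have h24 : P s(Q.u f, Q.y f) ↔ P s(Q.v f, Q.x f) :=
    hinv _ _ ⟨f, Or.inr (Or.inr (Or.inl ⟨rfl, rfl⟩))⟩
  by_cases p1 : P s(Q.x f, Q.u f) <;> by_cases p2 : P s(Q.u f, Q.y f)
  · have : (Q.sides f).filter P = Q.sides f := by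
      apply Finset.filter_true_of_mem
      intro e he
      rcases Q.mem_sides.1 he with h | h | h | h <;> subst h
      · exact p1
      · exact p2
      · exact h13.1 p1
      · exact h24.1 p2
    rw [this, Q.card_sides]
    decide
  · have : (Q.sides f).filter P = {s(Q.x f, Q.u f), s(Q.y f, Q.v f)} := by
      apply Finset.ext
      intro e
      simp only [Finset.mem_filter, Finset.mem_insert, Finset.mem_singleton]
      constructor
      · rintro ⟨he, hp⟩
        rcases Q.mem_sides.1 he with h | h | h | h <;> subst h
        · exact Or.inl rfl
        · exact absurd hp p2
        · exact Or.inr rfl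
        · exact absurd (h24.2 hp) p2
      · rintro (h | h) <;> subst h
        · exact ⟨Q.mem_sides.2 (by tauto), p1⟩
        · exact ⟨Q.mem_sides.2 (by tauto), h13.1 p1⟩
    rw [this, Finset.card_insert_of_notMem (by simp [Q.ne13 f]), Finset.card_singleton]
  · have : (Q.sides f).filter P = {s(Q.u f, Q.y f), s(Q.v f, Q.x f)} := by
      apply Finset.ext
      intro e
      simp only [Finset.mem_filter, Finset.mem_insert, Finset.mem_singleton]
      constructor
      · rintro ⟨he, hp⟩
        rcases Q.mem_sides.1 he with h | h | h | h <;> subst h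
        · exact absurd hp p1
        · exact Or.inl rfl
        · exact absurd (h13.2 hp) p1
        · exact Or.inr rfl
      · rintro (h | h) <;> subst h
        · exact ⟨Q.mem_sides.2 (by tauto), p2⟩
        · exact ⟨Q.mem_sides.2 (by tauto), h24.1 p2⟩
    rw [this, Finset.card_insert_of_notMem (by simp [Q.ne24 f]), Finset.card_singleton]
  · have : (Q.sides f).filter P = ∅ := by
      apply Finset.filter_false_of_mem
      intro e he
      rcases Q.mem_sides.1 he with h | h | h | h <;> subst h
      · exact p1
      · exact p2
      · exact fun hp => p1 (h13.2 hp)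
      · exact fun hp => p2 (h24.2 hp)
    rw [this, Finset.card_empty]
    decide

/-- sign of a vertex -/
def eps (a : V) : ℝ := if Q.color a then 1 else -1

lemma eps_black {a : V} (ha : Q.color a = true) : Q.eps a = 1 := by simp [eps, ha]

lemma eps_white {a : V} (ha : Q.color a = false) : Q.eps a = -1 := by simp [eps, ha]

/-- the edge function of a vertex function -/
def dval (h : V → ℝ) (e : Sym2 V) : ℝ :=
  Sym2.lift ⟨fun a b => Q.eps a * h a + Q.eps b * h b, fun a b => add_comm _ _⟩ e

@[simp] lemma dval_mk (h : V → ℝ) (a b : V) :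
    Q.dval h s(a, b) = Q.eps a * h a + Q.eps b * h b := rfl

lemma dval_add (h g : V → ℝ) (e : Sym2 V) :
    Q.dval (h + g) e = Q.dval h e + Q.dval g e := by
  induction e using Sym2.inductionOn with
  | hf a b => simp [Pi.add_apply]; ring

lemma dval_smul (c : ℝ) (h : V → ℝ) (e : Sym2 V) :
    Q.dval (c • h) e = c * Q.dval h e := by
  induction e using Sym2.inductionOn with
  | hf a b => simp [Pi.smul_apply, smul_eq_mul]; ring

/-- the alternating sum map, as a linear map -/
def Phi : (V → ℝ) →ₗ[ℝ] (F → ℝ) where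
  toFun h := fun f => h (Q.x f) + h (Q.y f) - h (Q.u f) - h (Q.v f)
  map_add' h g := by funext f; simp [Pi.add_apply]; ring
  map_smul' c h := by funext f; simp [Pi.smul_apply, smul_eq_mul]; ring

lemma opp_dval {h : V → ℝ}
    (hker : ∀ f, h (Q.x f) + h (Q.y f) - h (Q.u f) - h (Q.v f) = 0)
    {e e' : Sym2 V} (hopp : Q.Opp e e') : Q.dval h e' = - Q.dval h e := by
  obtain ⟨f, hc⟩ := hopp
  have hx := Q.eps_black (Q.colx f)
  have hy := Q.eps_black (Q.coly f)
  have hu := Q.eps_white (Q.colu f)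
  have hv := Q.eps_white (Q.colv f)
  have hf := hker f
  rcases hc with ⟨h1, h2⟩ | ⟨h1, h2⟩ | ⟨h1, h2⟩ | ⟨h1, h2⟩ <;> subst h1 <;> subst h2 <;>
    simp [hx, hy, hu, hv] <;> linarith

lemma dval_zero_iff {h : V → ℝ}
    (hker : ∀ f, h (Q.x f) + h (Q.y f) - h (Q.u f) - h (Q.v f) = 0)
    {a b : {e : Sym2 V // e ∈ Q.edgeSet}}
    (hr : Relation.EqvGen (fun e e' => Q.Opp e.1 e'.1) a b) :
    (Q.dval h a.1 = 0 ↔ Q.dval h b.1 = 0) := by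
  induction hr with
  | rel a b hab => rw [Q.opp_dval hker hab, neg_eq_zero]
  | refl a => exact Iff.rfl
  | symm a b _ ih => exact ih.symm
  | trans a b c _ _ ih1 ih2 => exact ih1.trans ih2

lemma color_ne_of_mem {a b : V} (h : s(a, b) ∈ Q.edgeSet) : Q.color a ≠ Q.color b := by
  obtain ⟨f, -, hf⟩ := Finset.mem_biUnion.1 h
  have key : ∀ p q : V, Q.color p = true → Q.color q = false → s(a, b) = s(p, q) →
      Q.color a ≠ Q.color b := by
    intro p q hp hq hpq
    rw [Sym2.eq_iff] at hpq
    rcases hpq with ⟨h1, h2⟩ | ⟨h1, h2⟩ <;> subst h1 <;> subst h2 <;> simp [hp, hq]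
  rcases Q.mem_sides.1 hf with h | h | h | h
  · exact key _ _ (Q.colx f) (Q.colu f) h
  · exact key _ _ (Q.coly f) (Q.colu f) (h.trans Sym2.eq_swap)
  · exact key _ _ (Q.coly f) (Q.colv f) h
  · exact key _ _ (Q.colx f) (Q.colv f) (h.trans Sym2.eq_swap)

noncomputable instance : Fintype Q.Tracks :=
  @Quotient.fintype _ _ Q.trackSetoid (fun _ _ => Classical.propDecidable _)

end QuadData

/-- For a connected finite planar quadrangulation with boundary none of whose
train tracks is a loop, the alternating-sum map `Φ : ℝ^V → ℝ^F` is surjective. -/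
theorem alternating_sum_surjective {V F : Type*} [Fintype V] [DecidableEq V]
    [Fintype F] [DecidableEq F]
    (Q : QuadData V F) (hP : Q.IsProper) (hNL : Q.NoLoopTrack) :
    Function.Surjective
      (fun (h : V → ℝ) (f : F) => h (Q.x f) + h (Q.y f) - h (Q.u f) - h (Q.v f)) := by
  classical
  have key : Function.Surjective Q.Phi := by
    obtain ⟨v₀⟩ : Nonempty V := hP.connected.nonempty
    -- the comparison map recording the value at `v₀` and one edge value per train track
    let Psi : (V → ℝ) →ₗ[ℝ] ℝ × (Q.Tracks → ℝ) :=
      { toFun := fun h => (h v₀, fun t => Q.dval h (Quotient.out t).1)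
        map_add' := fun h g => Prod.ext rfl (funext fun t => Q.dval_add h g _)
        map_smul' := fun c h => Prod.ext rfl (funext fun t => Q.dval_smul c h _) }
    -- `Psi` is injective on the kernel of `Phi`
    have hinj : Function.Injective (Psi.comp (LinearMap.ker Q.Phi).subtype) := by
      rw [← LinearMap.ker_eq_bot, eq_bot_iff]
      rintro ⟨h, hker⟩ hx
      rw [LinearMap.mem_ker] at hx
      have hker' : ∀ f, h (Q.x f) + h (Q.y f) - h (Q.u f) - h (Q.v f) = 0 :=
        fun f => congrFun (LinearMap.mem_ker.1 hker) f
      have h0 : h v₀ = 0 := congrArg Prod.fst hx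
      have ht : ∀ t : Q.Tracks, Q.dval h (Quotient.out t).1 = 0 :=
        fun t => congrFun (congrArg Prod.snd hx) t
      have step1 : ∀ e : {e : Sym2 V // e ∈ Q.edgeSet}, Q.dval h e.1 = 0 := by
        intro e
        have hrel := Quotient.mk_out (s := Q.trackSetoid) e
        exact (Q.dval_zero_iff hker' hrel).1 (ht _)
      have step2 : ∀ a b : V, Q.graph.Adj a b → h a = h b := by
        intro a b hab
        rw [QuadData.graph, SimpleGraph.fromRel_adj] at hab
        obtain ⟨hne, hmem⟩ := hab
        have hmem' : s(a, b) ∈ Q.edgeSet := by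
          rcases hmem with hm | hm
          · exact hm
          · rwa [Sym2.eq_swap]
        have hd := step1 ⟨s(a, b), hmem'⟩
        rw [Q.dval_mk] at hd
        have hc := Q.color_ne_of_mem hmem'
        cases hca : Q.color a
        · have hcb : Q.color b = true := by
            cases hcb : Q.color b
            · rw [hca, hcb] at hc; exact absurd rfl hc
            · rfl
          rw [Q.eps_white hca, Q.eps_black hcb] at hd
          linarith
        · have hcb : Q.color b = false := by
            cases hcb : Q.color b
            · rfl
            · rw [hca, hcb] at hc; exact absurd rfl hc
          rw [Q.eps_black hca, Q.eps_white hcb] at hd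
          linarith
      have hwalk : ∀ {a b : V} (_ : Q.graph.Walk a b), h a = h b := by
        intro a b w
        induction w with
        | nil => rfl
        | cons hadj _ ih => exact (step2 _ _ hadj).trans ih
      rw [Submodule.mem_bot]
      apply Subtype.ext
      funext a
      obtain ⟨w⟩ := hP.connected.preconnected a v₀
      show h a = 0
      rw [hwalk w, h0]
    -- dimension bound on the kernel
    have hkle : Module.finrank ℝ (LinearMap.ker Q.Phi) ≤ 1 + Fintype.card Q.Tracks := by
      have hle := LinearMap.finrank_le_finrank_of_injective hinj
      rwa [Module.finrank_prod, Module.finrank_self, Module.finrank_fintype_fun_eq_card] at hle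
    -- counting boundary edges per track
    have htrack : ∀ t : Q.Tracks, 2 ≤ (Q.edgeSet.filter fun e =>
        (∃ hs : e ∈ Q.edgeSet, Quotient.mk Q.trackSetoid ⟨e, hs⟩ = t) ∧
          Q.faceCount e = 1).card := by
      intro t
      set P : Sym2 V → Prop :=
        fun e => ∃ hs : e ∈ Q.edgeSet, Quotient.mk Q.trackSetoid ⟨e, hs⟩ = t with hPdef
      have hinvP : ∀ a b, Q.Opp a b → (P a ↔ P b) := by
        intro a b hopp
        obtain ⟨ha, hb⟩ := Q.opp_mem hopp
        have heq : Quotient.mk Q.trackSetoid ⟨a, ha⟩ = Quotient.mk Q.trackSetoid ⟨b, hb⟩ :=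
          Quot.sound (Relation.EqvGen.rel _ _ hopp)
        constructor
        · rintro ⟨hs, hq⟩
          exact ⟨hb, by rw [← heq]; exact hq⟩
        · rintro ⟨hs, hq⟩
          exact ⟨ha, by rw [heq]; exact hq⟩
      set cls := Q.edgeSet.filter P with hclsdef
      have hcls_sub : cls ⊆ Q.edgeSet := Finset.filter_subset _ _
      have hpar : 2 ∣ ∑ e ∈ cls, Q.faceCount e := by
        have hcalc : ∑ e ∈ cls, Q.faceCount e = ∑ f : F, ((Q.sides f).filter P).card := by
          unfold QuadData.faceCount
          calc ∑ e ∈ cls, (Finset.univ.filter fun f => e ∈ Q.sides f).card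
              = ∑ e ∈ cls, ∑ f : F, (if e ∈ Q.sides f then 1 else 0) := by
                refine Finset.sum_congr rfl fun e _ => ?_
                rw [Finset.card_filter]
            _ = ∑ f : F, ∑ e ∈ cls, (if e ∈ Q.sides f then 1 else 0) := Finset.sum_comm
            _ = ∑ f : F, ((Q.sides f).filter P).card := by
                refine Finset.sum_congr rfl fun f _ => ?_
                rw [← Finset.card_filter]
                congr 1
                apply Finset.ext
                intro e
                simp only [Finset.mem_filter, hclsdef]
                constructor
                · rintro ⟨⟨-, hp⟩, hs⟩
                  exact ⟨hs, hp⟩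
                · rintro ⟨hs, hp⟩
                  exact ⟨⟨Q.sides_subset f hs, hp⟩, hs⟩
        rw [hcalc]
        exact Finset.dvd_sum fun f _ => Q.even_card_sides_filter P hinvP f
      have hsplit := Q.sum_fc_split hP.edge_le_two cls hcls_sub
      have hne : 1 ≤ (cls.filter fun e => Q.faceCount e = 1).card := by
        obtain ⟨e', hre, hfc⟩ := hNL (Quotient.out t)
        have hq : Quotient.mk Q.trackSetoid e' = t :=
          (Quot.sound hre).symm.trans (Quotient.out_eq t)
        refine Finset.card_pos.2 ⟨e'.1, ?_⟩
        exact Finset.mem_filter.2 ⟨Finset.mem_filter.2 ⟨e'.2, ⟨e'.2, hq⟩⟩, hfc⟩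
      have hfilter_eq : cls.filter (fun e => Q.faceCount e = 1) =
          Q.edgeSet.filter fun e => P e ∧ Q.faceCount e = 1 := by
        rw [hclsdef, Finset.filter_filter]
      rw [← hfilter_eq]
      obtain ⟨k, hk⟩ := hpar
      omega
    -- global boundary edge count
    set B := (Q.edgeSet.filter fun e => Q.faceCount e = 1).card with hBdef
    have hglobal : 2 * Fintype.card Q.Tracks ≤ B := by
      set fib : Q.Tracks → Finset (Sym2 V) := fun t => Q.edgeSet.filter fun e =>
        (∃ hs : e ∈ Q.edgeSet, Quotient.mk Q.trackSetoid ⟨e, hs⟩ = t) ∧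
          Q.faceCount e = 1 with hfibdef
      have hdisj : ∀ t ∈ (Finset.univ : Finset Q.Tracks), ∀ t' ∈ Finset.univ, t ≠ t' →
          Disjoint (fib t) (fib t') := by
        intro t _ t' _ hne
        rw [Finset.disjoint_left]
        intro e he he'
        obtain ⟨-, ⟨hs, hq⟩, -⟩ := Finset.mem_filter.1 he
        obtain ⟨-, ⟨hs', hq'⟩, -⟩ := Finset.mem_filter.1 he'
        exact hne (hq.symm.trans hq')
      have hcard := Finset.card_biUnion hdisj
      calc 2 * Fintype.card Q.Tracks = ∑ _t : Q.Tracks, 2 := by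
            rw [Finset.sum_const, Finset.card_univ, smul_eq_mul, mul_comm]
        _ ≤ ∑ t : Q.Tracks, (fib t).card := Finset.sum_le_sum fun t _ => htrack t
        _ = (Finset.univ.biUnion fib).card := hcard.symm
        _ ≤ B := by
            apply Finset.card_le_card
            intro e he
            obtain ⟨t, -, ht⟩ := Finset.mem_biUnion.1 he
            obtain ⟨hmem, -, hfc⟩ := Finset.mem_filter.1 ht
            exact Finset.mem_filter.2 ⟨hmem, hfc⟩
    -- Euler count
    have hsum := Q.sum_faceCount
    have hsplitE := Q.sum_fc_split hP.edge_le_two Q.edgeSet (Finset.Subset.refl _)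
    rw [hsum, ← hBdef] at hsplitE
    have heuler := hP.euler
    have hrn := LinearMap.finrank_range_add_finrank_ker Q.Phi
    rw [Module.finrank_fintype_fun_eq_card] at hrn
    have hrange_le : Module.finrank ℝ (LinearMap.range Q.Phi) ≤ Fintype.card F := by
      have := Submodule.finrank_le (LinearMap.range Q.Phi)
      rwa [Module.finrank_fintype_fun_eq_card] at this
    have hrange_eq : Module.finrank ℝ (LinearMap.range Q.Phi) = Fintype.card F := by
      omega
    rw [← LinearMap.range_eq_top]
    apply Submodule.eq_top_of_finrank_eq
    rw [hrange_eq, Module.finrank_fintype_fun_eq_card]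
  exact key
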